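/- arXiv:2504.19780 — 2 statements merged into one kernel-verified Lean document; each statement's English description precedes it below -/
import Mathlib

section
/- Let A, B be n×n real symmetric matrices. Then A and B strongly commute (i.e., there is a common orthonormal eigenbasis diagonalizing A with eigenvalues λ(A) in decreasing order and B with eigenvalues λ(B) in decreasing order, in the same order) if and only if λ(A+B) = λ(A) + λ(B), where λ(·) denotes the decreasingly ordered eigenvalue vector. -/
open Finset

/-- Decreasing rearrangement of a vector in ℝⁿ. -/
noncomputable def dsort {n : ℕ} (u : Fin n → ℝ) : Fin n → ℝ :=
  u ∘ Tuple.sort (fun i => -u i)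

/-- `Maj u v` : `u` is majorized by `v`. -/
def Maj {n : ℕ} (u v : Fin n → ℝ) : Prop :=
  (∀ k : ℕ, ∑ i ∈ univ.filter (fun i : Fin n => (i : ℕ) < k), dsort u i ≤
      ∑ i ∈ univ.filter (fun i : Fin n => (i : ℕ) < k), dsort v i) ∧
  ∑ i, u i = ∑ i, v i

open Matrix

/-- Decreasingly ordered eigenvalue vector of a real symmetric matrix. -/
noncomputable def specVec {n : ℕ} {A : Matrix (Fin n) (Fin n) ℝ} (hA : A.IsHermitian) :
    Fin n → ℝ :=
  dsort hA.eigenvalues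

/-- `A` and `B` strongly commute: a common orthonormal eigenbasis realizing both
decreasingly ordered spectra simultaneously. -/
def StrongCommute {n : ℕ} {A B : Matrix (Fin n) (Fin n) ℝ}
    (hA : A.IsHermitian) (hB : B.IsHermitian) : Prop :=
  ∃ U : Matrix (Fin n) (Fin n) ℝ, U * Uᵀ = 1 ∧
    Uᵀ * A * U = Matrix.diagonal (specVec hA) ∧
    Uᵀ * B * U = Matrix.diagonal (specVec hB)

/-! If `U` diagonalizes both `A` and `B`, it diagonalizes `A + B` with the antitone diagonal
`λ(A) + λ(B)`, which is therefore `λ(A + B)`.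

Conversely, let `U` be orthogonal with `Uᵀ (A + B) U = diag (λ(A) + λ(B))`. Then `Uᵀ A U` is an
orthogonal conjugate `W diag λ(A) Wᵀ`, and by Schur's inequality each sum of its first `k` diagonal
entries is at most the sum of the `k` largest eigenvalues of `A`; likewise for `B`. The two
diagonals add up to `λ(A) + λ(B)`, so all these inequalities are equalities and the diagonal of
`Uᵀ A U` is `λ(A)`. Finally, an orthogonal conjugate `M` of `diag γ` whose diagonal is `γ` equals
`diag γ`, since `‖M - diag γ‖² = ‖M‖² - 2 ⟪M, diag γ⟫ + ‖γ‖² = 0` in the Frobenius norm. -/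

open Polynomial

theorem antitone_dsort {n : ℕ} (u : Fin n → ℝ) : Antitone (dsort u) := fun _ _ hij => by
  simpa [dsort] using Tuple.monotone_sort (fun i => -u i) hij

theorem dsort_eq_of_map_eq {n : ℕ} {u v : Fin n → ℝ} (hv : Antitone v)
    (h : univ.val.map u = univ.val.map v) : dsort u = v := by
  rw [Fin.univ_val_map, Fin.univ_val_map, Multiset.coe_eq_coe] at h
  exact List.ofFn_injective <| ((Equiv.Perm.ofFn_comp_perm _ u).trans h).eq_of_sortedGE
    (antitone_dsort u).sortedGE_ofFn hv.sortedGE_ofFn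

section OrthogonalConjugate

variable {ι : Type*} [Fintype ι] [DecidableEq ι]

theorem charpoly_transpose_mul_mul {R : Type*} [CommRing R] {U : Matrix ι ι R}
    (hU : U * Uᵀ = 1) (M : Matrix ι ι R) : (Uᵀ * M * U).charpoly = M.charpoly := by
  rw [charpoly_mul_comm, ← Matrix.mul_assoc, hU, Matrix.one_mul]

theorem roots_charpoly_of_transpose_mul_mul_eq_diagonal {M U : Matrix ι ι ℝ} {d : ι → ℝ}
    (hU : U * Uᵀ = 1) (hd : Uᵀ * M * U = diagonal d) :
    M.charpoly.roots = univ.val.map d := by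
  rw [← charpoly_transpose_mul_mul hU, hd, charpoly_diagonal, roots_prod]
  · simp
  · simp [prod_ne_zero_iff, X_sub_C_ne_zero]

theorem sum_mul_le_sum_of_threshold {S : Finset ι} {c γ : ι → ℝ} (t : ℝ)
    (hS : ∀ j ∈ S, t ≤ γ j) (hSc : ∀ j ∉ S, γ j ≤ t) (hc₀ : ∀ j, 0 ≤ c j) (hc₁ : ∀ j, c j ≤ 1)
    (hc : ∑ j, c j = #S) : ∑ j, c j * γ j ≤ ∑ j ∈ S, γ j := by
  have hterm : ∀ j, c j * (γ j - t) ≤ if j ∈ S then γ j - t else 0 := by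
    intro j
    split_ifs with hj
    · exact mul_le_of_le_one_left (sub_nonneg.2 (hS j hj)) (hc₁ j)
    · exact mul_nonpos_of_nonneg_of_nonpos (hc₀ j) (sub_nonpos.2 (hSc j hj))
  calc ∑ j, c j * γ j = ∑ j, c j * (γ j - t) + t * ∑ j, c j := by
        rw [mul_sum, ← sum_add_distrib]
        exact sum_congr rfl fun j _ => by ring
    _ ≤ ∑ j, (if j ∈ S then γ j - t else 0) + t * #S := by
        rw [hc]
        gcongr with j
        exact hterm j
    _ = ∑ j ∈ S, γ j := by
        rw [sum_ite_mem, univ_inter, sum_sub_distrib, sum_const, nsmul_eq_mul]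
        ring

theorem sum_sq_eq_one_of_mul_transpose_eq_one {W : Matrix ι ι ℝ} (hW : W * Wᵀ = 1) (i : ι) :
    ∑ j, W i j ^ 2 = 1 := by
  simpa [mul_apply, sq] using congr_fun (congr_fun hW i) i

theorem mul_diagonal_mul_transpose_apply_self (W : Matrix ι ι ℝ) (γ : ι → ℝ) (i : ι) :
    (W * diagonal γ * Wᵀ) i i = ∑ j, W i j ^ 2 * γ j := by
  rw [mul_apply]
  simp only [mul_diagonal, transpose_apply]
  exact sum_congr rfl fun j _ => by ring

theorem sum_diag_mul_diagonal_mul_transpose_le {W : Matrix ι ι ℝ} (hW : W * Wᵀ = 1)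
    {γ : ι → ℝ} {S : Finset ι} (t : ℝ) (hS : ∀ j ∈ S, t ≤ γ j) (hSc : ∀ j ∉ S, γ j ≤ t) :
    ∑ i ∈ S, (W * diagonal γ * Wᵀ) i i ≤ ∑ i ∈ S, γ i := by
  have hcol : ∀ j, ∑ i, W i j ^ 2 = 1 := by
    simpa using
      sum_sq_eq_one_of_mul_transpose_eq_one (W := Wᵀ) (by simpa using mul_eq_one_comm.mp hW)
  calc ∑ i ∈ S, (W * diagonal γ * Wᵀ) i i = ∑ j, (∑ i ∈ S, W i j ^ 2) * γ j := by
        simp_rw [mul_diagonal_mul_transpose_apply_self, sum_mul]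
        exact sum_comm
    _ ≤ ∑ i ∈ S, γ i := by
        refine sum_mul_le_sum_of_threshold t hS hSc (fun j => sum_nonneg fun i _ => sq_nonneg _)
          (fun j => hcol j ▸ sum_le_sum_of_subset_of_nonneg (subset_univ S)
            fun i _ _ => sq_nonneg _) ?_
        rw [sum_comm]
        simp [sum_sq_eq_one_of_mul_transpose_eq_one hW]

theorem mul_diagonal_mul_transpose_eq_diagonal {W : Matrix ι ι ℝ} (hW : W * Wᵀ = 1)
    {γ : ι → ℝ} (h : ∀ i, (W * diagonal γ * Wᵀ) i i = γ i) :
    W * diagonal γ * Wᵀ = diagonal γ := by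
  set M := W * diagonal γ * Wᵀ
  set D := diagonal γ
  have hM : Mᴴ = M := by
    simp [M, conjTranspose_eq_transpose_of_trivial, transpose_mul, Matrix.mul_assoc]
  have hMM : (M * M).trace = (D * D).trace := by
    rw [show M * M = W * (D * (Wᵀ * W) * D) * Wᵀ by simp only [M, D, Matrix.mul_assoc],
      mul_eq_one_comm.mp hW, Matrix.mul_one, trace_mul_cycle, mul_eq_one_comm.mp hW,
      Matrix.one_mul]
  have hMD : (M * D).trace = (D * D).trace := by
    simp [D, trace, mul_diagonal, h]
  rw [← sub_eq_zero, ← trace_mul_conjTranspose_self_eq_zero_iff, conjTranspose_sub, hM,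
    diagonal_conjTranspose, star_trivial, sub_mul, mul_sub, mul_sub, trace_sub, trace_sub,
    trace_sub, trace_mul_comm D M, hMM, hMD]
  ring

end OrthogonalConjugate

theorem diag_eq_of_diag_add_diag_eq {ι : Type*} [Fintype ι] [DecidableEq ι] [LinearOrder ι]
    [LocallyFiniteOrderBot ι] {W Z : Matrix ι ι ℝ} (hW : W * Wᵀ = 1) (hZ : Z * Zᵀ = 1)
    {α β : ι → ℝ} (hα : Antitone α) (hβ : Antitone β)
    (h : ∀ i, (W * diagonal α * Wᵀ) i i + (Z * diagonal β * Zᵀ) i i = α i + β i) (i : ι) :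
    (W * diagonal α * Wᵀ) i i = α i := by
  have hsum_eq : ∀ {S : Finset ι} (t u : ℝ), (∀ j ∈ S, t ≤ α j) → (∀ j ∉ S, α j ≤ t) →
      (∀ j ∈ S, u ≤ β j) → (∀ j ∉ S, β j ≤ u) →
      ∑ j ∈ S, (W * diagonal α * Wᵀ) j j = ∑ j ∈ S, α j := by
    intro S t u hαS hαSc hβS hβSc
    have hA := sum_diag_mul_diagonal_mul_transpose_le hW t hαS hαSc
    have hB := sum_diag_mul_diagonal_mul_transpose_le hZ u hβS hβSc
    have hAB := sum_congr rfl fun j (_ : j ∈ S) => h j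
    rw [sum_add_distrib, sum_add_distrib] at hAB
    linarith
  have hIic := hsum_eq (S := Iic i) (α i) (β i) (fun j hj => hα (mem_Iic.1 hj))
    (fun j hj => hα (not_le.1 (mt mem_Iic.2 hj)).le) (fun j hj => hβ (mem_Iic.1 hj))
    (fun j hj => hβ (not_le.1 (mt mem_Iic.2 hj)).le)
  have hIio := hsum_eq (S := Iio i) (α i) (β i) (fun j hj => hα (mem_Iio.1 hj).le)
    (fun j hj => hα (not_lt.1 (mt mem_Iio.2 hj))) (fun j hj => hβ (mem_Iio.1 hj).le)
    (fun j hj => hβ (not_lt.1 (mt mem_Iio.2 hj)))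
  rw [← Iio_insert, sum_insert (by simp), sum_insert (by simp)] at hIic
  linarith

section Spectrum

variable {n : ℕ}

theorem specVec_eq_of_transpose_mul_mul_eq_diagonal {M U : Matrix (Fin n) (Fin n) ℝ}
    (hM : M.IsHermitian) {d : Fin n → ℝ} (hU : U * Uᵀ = 1) (hd : Uᵀ * M * U = diagonal d)
    (hd_anti : Antitone d) : specVec hM = d := by
  refine dsort_eq_of_map_eq hd_anti ?_
  rw [← roots_charpoly_of_transpose_mul_mul_eq_diagonal hU hd, hM.roots_charpoly_eq_eigenvalues]
  simp

theorem Matrix.IsHermitian.mul_transpose_eigenvectorUnitary {M : Matrix (Fin n) (Fin n) ℝ}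
    (hM : M.IsHermitian) :
    (hM.eigenvectorUnitary : Matrix (Fin n) (Fin n) ℝ) *
      (hM.eigenvectorUnitary : Matrix (Fin n) (Fin n) ℝ)ᵀ = 1 := by
  simpa [star_eq_conjTranspose] using Unitary.coe_mul_star_self hM.eigenvectorUnitary

theorem Matrix.IsHermitian.transpose_eigenvectorUnitary_mul_mul {M : Matrix (Fin n) (Fin n) ℝ}
    (hM : M.IsHermitian) :
    (hM.eigenvectorUnitary : Matrix (Fin n) (Fin n) ℝ)ᵀ * M * hM.eigenvectorUnitary =
      diagonal hM.eigenvalues := by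
  simpa [Unitary.conjStarAlgAut_star_apply, star_eq_conjTranspose] using
    hM.conjStarAlgAut_star_eigenvectorUnitary

theorem Matrix.IsHermitian.exists_transpose_mul_mul_eq_diagonal_specVec
    {M : Matrix (Fin n) (Fin n) ℝ} (hM : M.IsHermitian) :
    ∃ U : Matrix (Fin n) (Fin n) ℝ, U * Uᵀ = 1 ∧ Uᵀ * M * U = diagonal (specVec hM) := by
  set V : Matrix (Fin n) (Fin n) ℝ := ↑hM.eigenvectorUnitary
  set σ := Tuple.sort (fun i => -hM.eigenvalues i)
  refine ⟨V.submatrix id σ, ?_, ?_⟩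
  · rw [transpose_submatrix, submatrix_mul_transpose_submatrix,
      hM.mul_transpose_eigenvectorUnitary]
  · have h : Vᵀ.submatrix σ id * M * V.submatrix id σ = (Vᵀ * M * V).submatrix σ σ := by
      rw [submatrix_mul _ _ _ id _ Function.bijective_id,
        submatrix_mul _ _ _ id _ Function.bijective_id, submatrix_id_id]
    rw [transpose_submatrix, h, hM.transpose_eigenvectorUnitary_mul_mul, submatrix_diagonal_equiv]
    rfl

theorem Matrix.IsHermitian.exists_transpose_mul_mul_eq_conj_diagonal_specVec
    {M U : Matrix (Fin n) (Fin n) ℝ} (hM : M.IsHermitian) (hU : U * Uᵀ = 1) :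
    ∃ W : Matrix (Fin n) (Fin n) ℝ,
      W * Wᵀ = 1 ∧ Uᵀ * M * U = W * diagonal (specVec hM) * Wᵀ := by
  obtain ⟨V, hV, hVM⟩ := hM.exists_transpose_mul_mul_eq_diagonal_specVec
  refine ⟨Uᵀ * V, ?_, ?_⟩
  · rw [transpose_mul, transpose_transpose, Matrix.mul_assoc, ← Matrix.mul_assoc V, hV,
      Matrix.one_mul, mul_eq_one_comm.mp hU]
  · rw [← hVM, transpose_mul, transpose_transpose]
    calc Uᵀ * M * U = Uᵀ * (V * Vᵀ) * M * (V * Vᵀ) * U := by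
          rw [hV, Matrix.mul_one, Matrix.mul_one]
      _ = Uᵀ * V * (Vᵀ * M * V) * (Vᵀ * U) := by noncomm_ring

end Spectrum

theorem stmt9 {n : ℕ} {A B : Matrix (Fin n) (Fin n) ℝ}
    (hA : A.IsHermitian) (hB : B.IsHermitian) :
    StrongCommute hA hB ↔ specVec (hA.add hB) = specVec hA + specVec hB := by
  have hα : Antitone (specVec hA) := antitone_dsort _
  have hβ : Antitone (specVec hB) := antitone_dsort _
  constructor
  · rintro ⟨U, hU, hAU, hBU⟩
    refine specVec_eq_of_transpose_mul_mul_eq_diagonal (hA.add hB) hU ?_ (hα.add hβ)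
    rw [Matrix.mul_add, Matrix.add_mul, hAU, hBU, diagonal_add]
    rfl
  · intro h
    obtain ⟨U, hU, hABU⟩ := (hA.add hB).exists_transpose_mul_mul_eq_diagonal_specVec
    obtain ⟨W, hW, hAW⟩ := hA.exists_transpose_mul_mul_eq_conj_diagonal_specVec hU
    obtain ⟨Z, hZ, hBZ⟩ := hB.exists_transpose_mul_mul_eq_conj_diagonal_specVec hU
    have hdiag : ∀ i, (W * diagonal (specVec hA) * Wᵀ) i i +
        (Z * diagonal (specVec hB) * Zᵀ) i i = specVec hA i + specVec hB i := by
      intro i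
      rw [← hAW, ← hBZ, ← Matrix.add_apply, ← Matrix.add_mul, ← Matrix.mul_add, hABU, h,
        diagonal_apply_eq, Pi.add_apply]
    refine ⟨U, hU, ?_, ?_⟩
    · rw [hAW]
      exact mul_diagonal_mul_transpose_eq_diagonal hW <|
        diag_eq_of_diag_add_diag_eq hW hZ hα hβ hdiag
    · rw [hBZ]
      exact mul_diagonal_mul_transpose_eq_diagonal hZ <|
        diag_eq_of_diag_add_diag_eq hZ hW hβ hα
          fun i => by linarith [hdiag i]
end

section
/- Let F(X) = f(λ(X)) be a Schur-convex spectral function on n×n real symmetric matrices, let A, B be symmetric, and let X̄ be a symmetric matrix with λ(X̄) = λ(B) such that A and X̄ strongly commute. Then X̄ is a global minimizer of F(X − A) over the set {X symmetric : λ(X) = λ(B)}. -/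
open Finset

open Matrix

/-!
Write `d = λ(X) - λ(A)`. Since `A` and `X̄` are diagonalised by one orthogonal matrix with
both spectra in decreasing order and `λ(X̄) = λ(B) = λ(X)`, the matrix `X̄ - A` has spectrum `d`.
Lidskii's inequality says `d↓ ≺ λ(X - A)`, so Schur-convexity gives `F(X̄ - A) ≤ F(X - A)`.

For Lidskii's inequality over an index set `S` with `m = |S|`, let `c = λₘ(X - A)` and let `P`
be the positive part of `X - A - c`. Then `A + P` dominates both `A` and `X - c` in the Loewner
order, and Weyl's monotonicity principle together with a trace computation bounds
`∑_{i ∈ S} (λᵢ(X) - λᵢ(A))` by `tr P + m c = ∑_{j < m} λⱼ(X - A)`.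
-/

section Weyl

open Module Submodule

variable {𝕜 E : Type*} [RCLike 𝕜] [NormedAddCommGroup E] [InnerProductSpace 𝕜 E] {n : ℕ}

lemma OrthonormalBasis.repr_eq_zero_of_mem_span_image {ι : Type*} [Fintype ι]
    (b : OrthonormalBasis ι 𝕜 E) {s : Set ι} {x : E} (hx : x ∈ span 𝕜 (b '' s)) {i : ι}
    (hi : i ∉ s) : b.repr x i = 0 := by
  have := b.toBasis.repr_support_subset_of_mem_span s (by simpa using hx)
  by_contra h
  exact hi (this (by simpa using h))

lemma OrthonormalBasis.finrank_span_image {ι : Type*} [Fintype ι]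
    (b : OrthonormalBasis ι 𝕜 E) (s : Finset ι) :
    finrank 𝕜 (span 𝕜 (b '' s)) = #s := by
  rw [Set.image_eq_range, finrank_span_eq_card]
  · simp
  exact b.orthonormal.linearIndependent.comp _ Subtype.val_injective

namespace LinearMap.IsSymmetric

variable [FiniteDimensional 𝕜 E] {T : E →ₗ[𝕜] E}

lemma eigenvalues_eq_comp_finCongr (hT : T.IsSymmetric) {m : ℕ} (hm : finrank 𝕜 E = m)
    (hn : finrank 𝕜 E = n) :
    hT.eigenvalues hm = hT.eigenvalues hn ∘ finCongr (hm.symm.trans hn) := by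
  subst hm hn
  rfl

variable (hT : T.IsSymmetric) (hn : finrank 𝕜 E = n)
include hT

lemma re_inner_apply_self_eq_sum (x : E) :
    RCLike.re (inner 𝕜 (T x) x) =
      ∑ i, hT.eigenvalues hn i * ‖(hT.eigenvectorBasis hn).repr x i‖ ^ 2 := by
  rw [← (hT.eigenvectorBasis hn).repr.inner_map_map, PiLp.inner_apply, map_sum]
  refine sum_congr rfl fun i _ => ?_
  rw [eigenvectorBasis_apply_self_apply, RCLike.inner_apply, map_mul (starRingEnd 𝕜),
    RCLike.conj_ofReal, mul_left_comm, RCLike.mul_conj, RCLike.re_ofReal_mul,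
    ← RCLike.ofReal_pow, RCLike.ofReal_re]

lemma mul_norm_sq_le_re_inner_apply_self {s : Set (Fin n)} {c : ℝ}
    (hc : ∀ i ∈ s, c ≤ hT.eigenvalues hn i) {x : E}
    (hx : x ∈ span 𝕜 (hT.eigenvectorBasis hn '' s)) :
    c * ‖x‖ ^ 2 ≤ RCLike.re (inner 𝕜 (T x) x) := by
  rw [hT.re_inner_apply_self_eq_sum hn, ← (hT.eigenvectorBasis hn).repr.norm_map,
    EuclideanSpace.norm_sq_eq, mul_sum]
  refine sum_le_sum fun i _ => ?_
  by_cases hi : i ∈ s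
  · exact mul_le_mul_of_nonneg_right (hc i hi) (sq_nonneg _)
  · simp [(hT.eigenvectorBasis hn).repr_eq_zero_of_mem_span_image hx hi]

lemma re_inner_apply_self_le_mul_norm_sq {s : Set (Fin n)} {c : ℝ}
    (hc : ∀ i ∈ s, hT.eigenvalues hn i ≤ c) {x : E}
    (hx : x ∈ span 𝕜 (hT.eigenvectorBasis hn '' s)) :
    RCLike.re (inner 𝕜 (T x) x) ≤ c * ‖x‖ ^ 2 := by
  rw [hT.re_inner_apply_self_eq_sum hn, ← (hT.eigenvectorBasis hn).repr.norm_map,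
    EuclideanSpace.norm_sq_eq, mul_sum]
  refine sum_le_sum fun i _ => ?_
  by_cases hi : i ∈ s
  · exact mul_le_mul_of_nonneg_right (hc i hi) (sq_nonneg _)
  · simp [(hT.eigenvectorBasis hn).repr_eq_zero_of_mem_span_image hx hi]

/-- **Weyl's monotonicity principle.** The span of the top `k + 1` eigenvectors of `T` meets the
span of the bottom `n - k` eigenvectors of `S` in some `x ≠ 0`, and the two Rayleigh quotients
at `x` separate the `k`-th eigenvalues. -/
theorem eigenvalues_le_of_isPositive_sub {S : E →ₗ[𝕜] E} (hS : S.IsSymmetric) (hTS : (S - T).IsPositive) (k : Fin n) :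
    hT.eigenvalues hn k ≤ hS.eigenvalues hn k := by
  set V := span 𝕜 (hT.eigenvectorBasis hn '' ↑(Finset.Iic k))
  set W := span 𝕜 (hS.eigenvectorBasis hn '' ↑(Finset.Ici k))
  obtain ⟨x, hxV, hxW, hx0⟩ : ∃ x ∈ V, x ∈ W ∧ x ≠ 0 := by
    by_contra! h
    have := Submodule.finrank_add_finrank_le_of_disjoint (Submodule.disjoint_def.mpr h)
    rw [OrthonormalBasis.finrank_span_image, OrthonormalBasis.finrank_span_image, hn,
      Fin.card_Iic, Fin.card_Ici] at this
    omega
  have hlow := hT.mul_norm_sq_le_re_inner_apply_self hn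
    (fun i hi => hT.eigenvalues_antitone hn (Finset.mem_Iic.mp hi)) hxV
  have hup := hS.re_inner_apply_self_le_mul_norm_sq hn
    (fun i hi => hS.eigenvalues_antitone hn (Finset.mem_Ici.mp hi)) hxW
  have hmid : RCLike.re (inner 𝕜 (T x) x) ≤ RCLike.re (inner 𝕜 (S x) x) := by
    simpa [inner_sub_left] using hTS.re_inner_nonneg_left x
  exact le_of_mul_le_mul_right ((hlow.trans hmid).trans hup) (by positivity)

end LinearMap.IsSymmetric

end Weyl

section DecreasingRearrangement

variable {n : ℕ}

lemma dsort_antitone (u : Fin n → ℝ) : Antitone (dsort u) := fun _ _ hij =>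
  neg_le_neg_iff.mp (Tuple.monotone_sort (fun i => -u i) hij)

lemma dsort_comp_perm (u : Fin n → ℝ) (σ : Equiv.Perm (Fin n)) : dsort (u ∘ σ) = dsort u :=
  funext fun i =>
    neg_injective (congrFun (Tuple.comp_perm_comp_sort_eq_comp_sort (f := fun i => -u i)) i)

lemma dsort_eq_self_of_antitone {u : Fin n → ℝ} (hu : Antitone u) : dsort u = u := by
  have : Tuple.sort (fun i => -u i) = Equiv.refl _ :=
    Tuple.sort_eq_refl_iff_monotone.mpr fun _ _ hij => neg_le_neg (hu hij)
  simp [dsort, this]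

lemma dsort_eq_of_map_univ_eq {u v : Fin n → ℝ} (h : univ.val.map u = univ.val.map v) :
    dsort u = dsort v := by
  have hmap (w : Fin n → ℝ) : (List.ofFn (dsort w) : Multiset ℝ) = univ.val.map w := by
    rw [← Fin.univ_val_map, dsort, ← Multiset.map_map, Multiset.map_univ_val_equiv]
  refine List.ofFn_injective (List.Perm.eq_of_sortedGE (dsort_antitone u).sortedGE_ofFn
    (dsort_antitone v).sortedGE_ofFn ?_)
  rw [← Multiset.coe_eq_coe, hmap, hmap, h]

lemma dsort_dsort (u : Fin n → ℝ) : dsort (dsort u) = dsort u :=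
  dsort_eq_self_of_antitone (dsort_antitone u)

lemma dsort_sub_const (u : Fin n → ℝ) (c : ℝ) :
    dsort (fun i => u i - c) = fun i => dsort u i - c := by
  have hanti : Antitone fun i => dsort u i - c := fun _ _ hij => by
    simpa using dsort_antitone u hij
  rw [← dsort_eq_self_of_antitone hanti]
  exact (dsort_comp_perm (fun i => u i - c) _).symm

lemma sum_dsort (u : Fin n → ℝ) : ∑ i, dsort u i = ∑ i, u i :=
  Equiv.sum_comp _ u

lemma maj_dsort_left_iff {u v : Fin n → ℝ} : Maj (dsort u) v ↔ Maj u v := by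
  simp only [Maj, dsort_dsort, sum_dsort]

lemma sum_max_sub_le_sum_filter_lt {u : Fin n → ℝ} {m : ℕ} {c : ℝ}
    (hlow : ∀ j : Fin n, (j : ℕ) < m → c ≤ u j) (hhigh : ∀ j : Fin n, m ≤ (j : ℕ) → u j ≤ c) :
    ∑ j, max (u j - c) 0 ≤ ∑ j ∈ univ.filter (fun j : Fin n => (j : ℕ) < m), (u j - c) := by
  rw [← sum_filter_add_sum_filter_not univ (fun j : Fin n => (j : ℕ) < m)]
  have hin : ∀ j ∈ univ.filter (fun j : Fin n => (j : ℕ) < m), max (u j - c) 0 = u j - c :=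
    fun j hj => max_eq_left (sub_nonneg.mpr (hlow j (mem_filter.mp hj).2))
  have hout : ∀ j ∈ univ.filter (fun j : Fin n => ¬ (j : ℕ) < m), max (u j - c) 0 = 0 :=
    fun j hj => max_eq_right (sub_nonpos.mpr (hhigh j (not_lt.mp (mem_filter.mp hj).2)))
  rw [sum_congr rfl hin, sum_congr rfl hout, sum_const_zero, add_zero]

end DecreasingRearrangement

section SymmetricMatrices

variable {n : ℕ}

lemma Matrix.IsHermitian.exists_orthogonal_diagonalization {M : Matrix (Fin n) (Fin n) ℝ}
    (hM : M.IsHermitian) :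
    ∃ V : Matrix (Fin n) (Fin n) ℝ, V * Vᵀ = 1 ∧ M = V * diagonal hM.eigenvalues * Vᵀ := by
  have hstar : star (hM.eigenvectorUnitary : Matrix (Fin n) (Fin n) ℝ) =
      (hM.eigenvectorUnitary : Matrix (Fin n) (Fin n) ℝ)ᵀ := by
    rw [star_eq_conjTranspose, conjTranspose_eq_transpose_of_trivial]
  refine ⟨hM.eigenvectorUnitary, ?_, ?_⟩
  · rw [← hstar]
    exact mem_unitaryGroup_iff.mp hM.eigenvectorUnitary.2
  · conv_lhs => rw [hM.spectral_theorem]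
    simp [Unitary.conjStarAlgAut_apply, hstar]

lemma eq_mul_mul_transpose_of_transpose_mul_mul_eq {U M D : Matrix (Fin n) (Fin n) ℝ}
    (hU : U * Uᵀ = 1) (h : Uᵀ * M * U = D) : M = U * D * Uᵀ := by
  rw [← h, ← Matrix.mul_assoc, ← Matrix.mul_assoc, hU, Matrix.one_mul, Matrix.mul_assoc, hU,
    Matrix.mul_one]

lemma sub_smul_one_eq_mul_diagonal_mul_transpose {M V : Matrix (Fin n) (Fin n) ℝ}
    {w : Fin n → ℝ} (hV : V * Vᵀ = 1) (hMV : M = V * diagonal w * Vᵀ) (c : ℝ) :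
    M - c • 1 = V * diagonal (fun i => w i - c) * Vᵀ := by
  rw [← diagonal_sub, ← smul_one_eq_diagonal, Matrix.mul_sub, Matrix.sub_mul, ← hMV,
    Matrix.mul_smul, Matrix.smul_mul, Matrix.mul_one, hV]

lemma posSemidef_mul_diagonal_mul_transpose (V : Matrix (Fin n) (Fin n) ℝ) {d : Fin n → ℝ}
    (hd : ∀ i, 0 ≤ d i) : (V * diagonal d * Vᵀ).PosSemidef := by
  simpa [conjTranspose_eq_transpose_of_trivial] using
    (PosSemidef.diagonal fun i => hd i).mul_mul_conjTranspose_same V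

/-- `hM.eigenvalues` is indexed through an arbitrary equivalence `Fin (card (Fin n)) ≃ Fin n`, so
it need not be sorted; the eigenvalues of the operator are. -/
lemma specVec_eq_eigenvalues_toEuclideanLin {M : Matrix (Fin n) (Fin n) ℝ}
    (hM : M.IsHermitian) :
    specVec hM =
      (isSymmetric_toEuclideanLin_iff.mpr hM).eigenvalues finrank_euclideanSpace_fin := by
  set hT := isSymmetric_toEuclideanLin_iff.mpr hM
  have hperm : hM.eigenvalues = hT.eigenvalues finrank_euclideanSpace_fin ∘
      ((Fintype.equivOfCardEq (α := Fin (Fintype.card (Fin n))) (Fintype.card_fin _)).symm.trans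
        (finCongr (Fintype.card_fin n))) := by
    funext i
    simp [IsHermitian.eigenvalues, IsHermitian.eigenvalues₀,
      hT.eigenvalues_eq_comp_finCongr finrank_euclideanSpace finrank_euclideanSpace_fin]
  rw [specVec, hperm, dsort_comp_perm, dsort_eq_self_of_antitone (hT.eigenvalues_antitone _)]

lemma specVec_eq_dsort_of_eq_mul_diagonal_mul_transpose {M V : Matrix (Fin n) (Fin n) ℝ}
    (hM : M.IsHermitian) {w : Fin n → ℝ} (hV : V * Vᵀ = 1) (hMV : M = V * diagonal w * Vᵀ) :
    specVec hM = dsort w := by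
  apply dsort_eq_of_map_univ_eq
  have hchar : M.charpoly = (diagonal w).charpoly := by
    rw [hMV, charpoly_mul_comm, ← Matrix.mul_assoc, mul_eq_one_comm.mp hV, Matrix.one_mul]
  have h := hM.roots_charpoly_eq_eigenvalues
  rw [hchar, charpoly_diagonal,
    Polynomial.roots_prod _ _ (prod_ne_zero_iff.mpr fun i _ => Polynomial.X_sub_C_ne_zero (w i))]
    at h
  simpa using h.symm

lemma sum_specVec {M : Matrix (Fin n) (Fin n) ℝ} (hM : M.IsHermitian) :
    ∑ i, specVec hM i = M.trace := by
  simp [specVec, sum_dsort, hM.trace_eq_sum_eigenvalues]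

lemma specVec_sub_smul_one {M : Matrix (Fin n) (Fin n) ℝ} (hM : M.IsHermitian) (c : ℝ) :
    specVec (hM.sub (isHermitian_one.smul (IsSelfAdjoint.all c))) =
      fun i => specVec hM i - c := by
  obtain ⟨V, hV, hMV⟩ := hM.exists_orthogonal_diagonalization
  exact (specVec_eq_dsort_of_eq_mul_diagonal_mul_transpose _ hV
    (sub_smul_one_eq_mul_diagonal_mul_transpose hV hMV c)).trans (dsort_sub_const _ c)

lemma specVec_le_of_posSemidef_sub {M N : Matrix (Fin n) (Fin n) ℝ} (hM : M.IsHermitian)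
    (hN : N.IsHermitian) (hMN : (N - M).PosSemidef) (k : Fin n) :
    specVec hM k ≤ specVec hN k := by
  rw [specVec_eq_eigenvalues_toEuclideanLin, specVec_eq_eigenvalues_toEuclideanLin]
  refine LinearMap.IsSymmetric.eigenvalues_le_of_isPositive_sub _ _ _ ?_ k
  rwa [← map_sub, isPositive_toEuclideanLin_iff]

lemma exists_posSemidef_sub_sub_smul_one {C : Matrix (Fin n) (Fin n) ℝ} (hC : C.IsHermitian)
    (c : ℝ) : ∃ P : Matrix (Fin n) (Fin n) ℝ, P.PosSemidef ∧ (P - (C - c • 1)).PosSemidef ∧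
      P.trace = ∑ i, max (specVec hC i - c) 0 := by
  obtain ⟨V, hV, hCV⟩ := hC.exists_orthogonal_diagonalization
  refine ⟨V * diagonal (fun i => max (hC.eigenvalues i - c) 0) * Vᵀ,
    posSemidef_mul_diagonal_mul_transpose V fun i => le_max_right _ _, ?_, ?_⟩
  · rw [sub_smul_one_eq_mul_diagonal_mul_transpose hV hCV, ← Matrix.sub_mul, ← Matrix.mul_sub,
      diagonal_sub]
    exact posSemidef_mul_diagonal_mul_transpose V fun i => sub_nonneg.mpr (le_max_left _ _)
  · rw [trace_mul_cycle, mul_eq_one_comm.mp hV, Matrix.one_mul, trace_diagonal]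
    exact (Equiv.sum_comp _ fun i => max (hC.eigenvalues i - c) 0).symm

/-- **Lidskii's inequality**, for the partial sums over an arbitrary index set. -/
theorem sum_specVec_sub_le {A X : Matrix (Fin n) (Fin n) ℝ} (hA : A.IsHermitian)
    (hX : X.IsHermitian) (S : Finset (Fin n)) :
    ∑ i ∈ S, (specVec hX i - specVec hA i) ≤
      ∑ j ∈ univ.filter (fun j : Fin n => (j : ℕ) < #S), specVec (hX.sub hA) j := by
  rcases S.eq_empty_or_nonempty with rfl | hS
  · simp
  set m := #S
  have hm : 0 < m := hS.card_pos
  have hmn : m ≤ n := by simpa using S.card_le_univ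
  set hC := hX.sub hA
  set c := specVec hC ⟨m - 1, by omega⟩
  obtain ⟨P, hP, hPC, htr⟩ := exists_posSemidef_sub_sub_smul_one hC c
  have hY := hA.add hP.isHermitian
  have hXY : ∀ i, specVec hX i - c ≤ specVec hY i := fun i => by
    rw [← congrFun (specVec_sub_smul_one hX c) i]
    exact specVec_le_of_posSemidef_sub _ hY (by convert hPC using 1; abel) i
  have hAY : ∀ i, specVec hA i ≤ specVec hY i :=
    specVec_le_of_posSemidef_sub hA hY (by simpa using hP)
  have hsplit : ∑ j, max (specVec hC j - c) 0 ≤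
      ∑ j ∈ univ.filter (fun j : Fin n => (j : ℕ) < m), (specVec hC j - c) :=
    sum_max_sub_le_sum_filter_lt
      (fun j hj => dsort_antitone _ (Fin.le_def.mpr (show (j : ℕ) ≤ m - 1 by omega)))
      (fun j hj => dsort_antitone _ (Fin.le_def.mpr (show m - 1 ≤ (j : ℕ) by omega)))
  calc ∑ i ∈ S, (specVec hX i - specVec hA i)
      ≤ ∑ i ∈ S, ((specVec hY i - specVec hA i) + c) :=
        sum_le_sum fun i _ => by linarith [hXY i]
    _ = ∑ i ∈ S, (specVec hY i - specVec hA i) + m * c := by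
        rw [sum_add_distrib, sum_const, nsmul_eq_mul]
    _ ≤ ∑ i, (specVec hY i - specVec hA i) + m * c := by
        gcongr ?_ + _
        exact sum_le_sum_of_subset_of_nonneg (subset_univ S) fun i _ _ => sub_nonneg.mpr (hAY i)
    _ = P.trace + m * c := by
        rw [sum_sub_distrib, sum_specVec, sum_specVec, trace_add]
        ring
    _ ≤ ∑ j ∈ univ.filter (fun j : Fin n => (j : ℕ) < m), (specVec hC j - c) + m * c := by
        rw [htr]
        gcongr
    _ = ∑ j ∈ univ.filter (fun j : Fin n => (j : ℕ) < m), specVec hC j := by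
        rw [sum_sub_distrib, sum_const, Fin.card_filter_val_lt, min_eq_right hmn, nsmul_eq_mul]
        ring

theorem maj_specVec_sub_specVec {A X : Matrix (Fin n) (Fin n) ℝ} (hA : A.IsHermitian)
    (hX : X.IsHermitian) : Maj (fun i => specVec hX i - specVec hA i) (specVec (hX.sub hA)) := by
  refine ⟨fun k => ?_, ?_⟩
  · set σ := Tuple.sort fun i => -(specVec hX i - specVec hA i)
    set T := univ.filter fun i : Fin n => (i : ℕ) < k
    have hT : univ.filter (fun j : Fin n => (j : ℕ) < #(T.map σ.toEmbedding)) = T := by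
      rw [card_map, Fin.card_filter_val_lt]
      exact filter_congr fun j _ => by have := j.isLt; omega
    have := sum_specVec_sub_le hA hX (T.map σ.toEmbedding)
    rw [hT, sum_map] at this
    exact this.trans_eq (by rw [specVec, dsort_dsort])
  · rw [sum_specVec, sum_sub_distrib, sum_specVec, sum_specVec, trace_sub]

end SymmetricMatrices

theorem stmt12_general {n : ℕ} {A B Xbar : Matrix (Fin n) (Fin n) ℝ}
    (hA : A.IsHermitian) (hB : B.IsHermitian) (hXbar : Xbar.IsHermitian)
    (f : (Fin n → ℝ) → ℝ)
    (hschur : ∀ u v : Fin n → ℝ, Maj u v → f u ≤ f v)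
    (hspec : specVec hXbar = specVec hB)
    (hcomm : StrongCommute hA hXbar) :
    ∀ (X : Matrix (Fin n) (Fin n) ℝ) (hX : X.IsHermitian), specVec hX = specVec hB →
      f (specVec (hXbar.sub hA)) ≤ f (specVec (hX.sub hA)) := by
  intro X hX hXB
  obtain ⟨U, hU, hUA, hUXbar⟩ := hcomm
  have hdiff : Xbar - A = U * diagonal (fun i => specVec hX i - specVec hA i) * Uᵀ := by
    conv_lhs => rw [eq_mul_mul_transpose_of_transpose_mul_mul_eq hU hUXbar,
      eq_mul_mul_transpose_of_transpose_mul_mul_eq hU hUA]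
    rw [← Matrix.sub_mul, ← Matrix.mul_sub, diagonal_sub, hspec, hXB]
  rw [specVec_eq_dsort_of_eq_mul_diagonal_mul_transpose _ hU hdiff]
  exact hschur _ _ (maj_dsort_left_iff.mpr (maj_specVec_sub_specVec hA hX))

theorem stmt12 {n : ℕ} {A B Xbar : Matrix (Fin n) (Fin n) ℝ}
    (hA : A.IsHermitian) (hB : B.IsHermitian) (hXbar : Xbar.IsHermitian)
    (f : (Fin n → ℝ) → ℝ)
    (hsymm : ∀ (σ : Equiv.Perm (Fin n)) (u : Fin n → ℝ), f (u ∘ σ) = f u)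
    (hschur : ∀ u v : Fin n → ℝ, Maj u v → f u ≤ f v)
    (hspec : specVec hXbar = specVec hB)
    (hcomm : StrongCommute hA hXbar) :
    ∀ (X : Matrix (Fin n) (Fin n) ℝ) (hX : X.IsHermitian), specVec hX = specVec hB →
      f (specVec (hXbar.sub hA)) ≤ f (specVec (hX.sub hA)) :=
  stmt12_general hA hB hXbar f hschur hspec hcomm
end
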